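/- Let ξ ∈ Z₂ and let u, w be two F-linearly independent Σ-vectors such that the number of one-dimensional 𝔽_q-subspaces ⟨(s,t)⟩ of 𝔽_q² with Q(su + tw) = 0 is exactly 2 (the extended Σ-line span_F{u,w} is secant to Q₀). Then the number of one-dimensional F-subspaces ⟨v⟩ of F⁴ with v ∈ span_F{u, w} and H(v) = 2ξ·Q(v)^{(q+1)/2} is exactly q+1. -/

import Mathlib

/-!
Let `U`, `W` be the Σ-vectors over the two isotropic `𝔽_q`-points of the secant Σ-line. They span
the same `F`-line as `u`, `w`, and with `B ∈ 𝔽_q^×` the polar form of `Q` at `(U, W)`,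
`Q(sU + tW) = B st` and `H(sU + tW) = B (s t^q + s^q t)`. So `⟨U⟩` lies on the surface, and
`⟨rU + W⟩` does iff `r + r^q = c r^{n+1}`, where `n = (q-1)/2`, `c = 2ξB^n` and `c² = 4ξ²`.
This factors as `r (r^n - μ₁)(r^n - μ₂) = 0` with `μᵢ = c (1 ± δ)/2` the roots of `μ² - cμ + 1`
and `δ² = 1 - ξ⁻²`. As `1 - ξ⁻²` is a nonsquare of `𝔽_q`, `δ^q = -δ`, which forces
`μᵢ^{2(q+1)} = 1`: each `μᵢ` is an `n`-th power in the cyclic group `F^×` of order `2n(q+1)`,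
so has exactly `n` `n`-th roots. This gives `1 + 2n = q` values of `r`, and `q + 1` points.
-/

/-- `Q(α,β,γ,δ) = αδ - βγ`, the quadratic form of the hyperbolic quadric. -/
def Qf {F : Type*} [Field F] (v : Fin 4 → F) : F := v 0 * v 3 - v 1 * v 2

/-- `H(α,β,γ,δ) = α^{q+1} - β^{q+1} - γ^{q+1} + δ^{q+1}`, the Hermitian form. -/
def Hf (q : ℕ) {F : Type*} [Field F] (v : Fin 4 → F) : F :=
  v 0 ^ (q + 1) - v 1 ^ (q + 1) - v 2 ^ (q + 1) + v 3 ^ (q + 1)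

/-- `v = (α,β,γ,δ)` is nonsingular if `(αz + δ^q z^q)x + (γz + β^q z^q)x^q ≠ 0`
for all nonzero `x, z`. -/
def Nonsingular (q : ℕ) {F : Type*} [Field F] (v : Fin 4 → F) : Prop :=
  ∀ x z : F, x ≠ 0 → z ≠ 0 →
    (v 0 * z + v 3 ^ q * z ^ q) * x + (v 2 * z + v 1 ^ q * z ^ q) * x ^ q ≠ 0

/-- `Δ(v) = H(v)² - 4·Q(v)^{q+1}`. -/
def Deltaf (q : ℕ) {F : Type*} [Field F] (v : Fin 4 → F) : F :=
  Hf q v ^ 2 - 4 * Qf v ^ (q + 1)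

/-- A Σ-vector: a nonzero vector of the form `(α, β, β^q, α^q)`. -/
def IsSigmaVec (q : ℕ) {F : Type*} [Field F] (v : Fin 4 → F) : Prop :=
  v ≠ 0 ∧ ∃ α β : F, v = ![α, β, β ^ q, α ^ q]

/-- The sesquilinear form `h(u,v) = u₁v₁^q - u₂v₂^q - u₃v₃^q + u₄v₄^q`. -/
def hForm (q : ℕ) {F : Type*} [Field F] (u v : Fin 4 → F) : F :=
  u 0 * v 0 ^ q - u 1 * v 1 ^ q - u 2 * v 2 ^ q + u 3 * v 3 ^ q

/-- The one-dimensional `F`-subspace (as a set) spanned by `v`. -/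
def Fline {F : Type*} [Field F] (v : Fin 4 → F) : Set (Fin 4 → F) :=
  {x | ∃ a : F, x = a • v}

/-- The number of one-dimensional `𝔽_q`-subspaces `⟨(s,t)⟩` of `𝔽_q²` with
`Q(s·u + t·w) = 0`. -/
noncomputable def tangentCount (q : ℕ) {F : Type*} [Field F] (u w : Fin 4 → F) : ℕ :=
  Set.ncard {L : Set (F × F) | ∃ s t : F, s ^ q = s ∧ t ^ q = t ∧ (s, t) ≠ (0, 0) ∧
    Qf (fun i => s * u i + t * w i) = 0 ∧
    L = {p : F × F | ∃ e : F, e ^ q = e ∧ p = (e * s, e * t)}}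

/-- `Z₁`: the set of `ξ ∉ {0, 1, -1}` such that `1 - ξ⁻²` is a nonzero square of `𝔽_q`. -/
def Zone (q : ℕ) (F : Type*) [Field F] : Set F :=
  {ξ | ξ ≠ 0 ∧ ξ ≠ 1 ∧ ξ ≠ -1 ∧ ∃ s : F, s ^ q = s ∧ s ≠ 0 ∧ 1 - (ξ ^ 2)⁻¹ = s ^ 2}

/-- `Z₂`: the set of `ξ ≠ 0` such that `1 - ξ⁻²` is a nonzero nonsquare of `𝔽_q`. -/
def Ztwo (q : ℕ) (F : Type*) [Field F] : Set F :=
  {ξ | ξ ≠ 0 ∧ (1 - (ξ ^ 2)⁻¹) ^ q = 1 - (ξ ^ 2)⁻¹ ∧ 1 - (ξ ^ 2)⁻¹ ≠ 0 ∧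
    ¬∃ s : F, s ^ q = s ∧ 1 - (ξ ^ 2)⁻¹ = s ^ 2}

section CardSq

variable {F : Type*} [Field F] [Fintype F] {q : ℕ}

theorem FiniteField.ncard_setOf_pow_eq {n k : ℕ} (hnk : n * k = Fintype.card F - 1) {a : F}
    (ha : a ^ k = 1) : {x : F | x ^ n = a}.ncard = n := by
  classical
  have hN : 0 < Fintype.card F - 1 := by have := Fintype.one_lt_card (α := F); omega
  have hn : 0 < n := Nat.pos_of_ne_zero (by rintro rfl; omega)
  have : NeZero k := ⟨by rintro rfl; omega⟩
  obtain ⟨g, hg⟩ := IsCyclic.exists_ofOrder_eq_natCard (α := Fˣ)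
  have hζ : IsPrimitiveRoot (g : F) (n * k) := by
    rw [IsPrimitiveRoot.coe_units_iff, IsPrimitiveRoot.iff_orderOf, hg, Nat.card_eq_fintype_card,
      Fintype.card_units, hnk]
  obtain ⟨i, -, hi⟩ := (hζ.pow (hnk ▸ hN) rfl).eq_pow_of_pow_eq_one ha
  have hroot : ∃ b : F, b ^ n = a := ⟨(g : F) ^ i, by rw [← hi, ← pow_mul, ← pow_mul, mul_comm]⟩
  have hζn := hζ.pow (hnk ▸ hN) (mul_comm n k)
  have ha0 : a ≠ 0 := by rintro rfl; simp [NeZero.ne k] at ha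
  have hset : {x : F | x ^ n = a} = ↑(Polynomial.nthRoots n a).toFinset := by
    ext x
    simp [Polynomial.mem_nthRoots hn]
  rw [hset, Set.ncard_coe_finset, Multiset.toFinset_card_of_nodup (hζn.nthRoots_nodup ha0),
    hζn.card_nthRoots, if_pos hroot]

theorem FiniteField.isSquare_of_pow_eq_self (hF : Fintype.card F = q ^ 2) (hodd : Odd q)
    (hchar : ringChar F ≠ 2) {a : F} (ha : a ^ q = a) : IsSquare a := by
  rcases eq_or_ne a 0 with rfl | ha0
  · exact IsSquare.zero
  obtain ⟨n, rfl⟩ := hodd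
  have h1 : a ^ (2 * n) = 1 := mul_right_cancel₀ ha0 (by rw [← pow_succ, ha, one_mul])
  have hexp : (2 * n + 1) ^ 2 / 2 = 2 * n * (n + 1) := by
    rw [show (2 * n + 1) ^ 2 = 2 * (2 * n * (n + 1)) + 1 by ring]
    omega
  rw [FiniteField.isSquare_iff hchar ha0, hF, hexp, pow_mul, h1, one_pow]

theorem exists_eq_ringChar_pow_of_card_eq_sq (hF : Fintype.card F = q ^ 2) :
    ∃ i, q = ringChar F ^ i := by
  obtain ⟨k, hp, hk⟩ := FiniteField.card F (ringChar F)
  obtain ⟨i, -, hi⟩ := (Nat.dvd_prime_pow hp).mp ⟨q, by rw [← hk, hF, sq]⟩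
  exact ⟨i, hi⟩

theorem add_pow_of_card_eq_sq (hF : Fintype.card F = q ^ 2) (x y : F) :
    (x + y) ^ q = x ^ q + y ^ q := by
  obtain ⟨i, rfl⟩ := exists_eq_ringChar_pow_of_card_eq_sq hF
  have : Fact (ringChar F).Prime := ⟨CharP.char_is_prime F _⟩
  exact add_pow_char_pow x y _ _

theorem pow_pow_of_card_eq_sq (hF : Fintype.card F = q ^ 2) (x : F) : (x ^ q) ^ q = x := by
  rw [← pow_mul, ← sq, ← hF, FiniteField.pow_card]

theorem ringChar_ne_two_of_card_eq_sq (hF : Fintype.card F = q ^ 2) (hodd : Odd q) :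
    ringChar F ≠ 2 := by
  intro h2
  obtain ⟨i, hi⟩ := exists_eq_ringChar_pow_of_card_eq_sq hF
  rw [h2] at hi
  have hi0 : i = 0 := by
    by_contra h
    exact Nat.not_even_iff_odd.mpr (hi ▸ hodd) (Nat.even_pow.mpr ⟨even_two, h⟩)
  have := Fintype.one_lt_card (α := F)
  simp [hF, hi, hi0] at this

end CardSq

theorem sub_pow_of_add_pow {R : Type*} [Ring R] {q : ℕ}
    (hadd : ∀ x y : R, (x + y) ^ q = x ^ q + y ^ q) (x y : R) : (x - y) ^ q = x ^ q - y ^ q := by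
  rw [eq_sub_iff_add_eq, ← hadd, sub_add_cancel]

theorem sq_pow_div_two_eq_one {M₀ : Type*} [MonoidWithZero M₀] [IsCancelMulZero M₀] {q : ℕ}
    (hodd : Odd q) {b : M₀} (hb : b ≠ 0) (hbq : b ^ q = b) : (b ^ ((q - 1) / 2)) ^ 2 = 1 := by
  obtain ⟨n, rfl⟩ := hodd
  rw [show (2 * n + 1 - 1) / 2 = n by omega, ← pow_mul, mul_comm]
  exact mul_right_cancel₀ hb (by rw [← pow_succ, hbq, one_mul])

section Solutions

variable {F : Type*} [Field F]

theorem setOf_add_pow_eq_mul_pow_eq {n : ℕ} {c μ₁ μ₂ : F} (hsum : μ₁ + μ₂ = c)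
    (hprod : μ₁ * μ₂ = 1) :
    {r : F | r + r ^ (2 * n + 1) = c * r ^ (n + 1)} =
      insert 0 ({r | r ^ n = μ₁} ∪ {r | r ^ n = μ₂}) := by
  ext r
  have key : r + r ^ (2 * n + 1) - c * r ^ (n + 1) = r * ((r ^ n - μ₁) * (r ^ n - μ₂)) := by
    linear_combination r ^ (n + 1) * hsum - r * hprod
  simp only [Set.mem_ofPred_eq, Set.mem_insert_iff, Set.mem_union, ← sub_eq_zero (a := r + _), key,
    mul_eq_zero, sub_eq_zero]

theorem pow_two_mul_succ_eq_one {q : ℕ} {μ ν : F} (hμ : (μ ^ q) ^ 2 = ν ^ 2)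
    (hμν : μ * ν = 1) : μ ^ (2 * (q + 1)) = 1 := by
  rw [show 2 * (q + 1) = q * 2 + 2 by ring, pow_add, pow_mul, hμ, ← mul_pow, mul_comm ν μ, hμν,
    one_pow]

theorem ncard_setOf_add_pow_eq_mul_pow [Fintype F] {q : ℕ} (hF : Fintype.card F = q ^ 2)
    (hodd : Odd q) {c μ₁ μ₂ : F} (hsum : μ₁ + μ₂ = c) (hprod : μ₁ * μ₂ = 1) (hne : μ₁ ≠ μ₂)
    (h₁ : μ₁ ^ (2 * (q + 1)) = 1) (h₂ : μ₂ ^ (2 * (q + 1)) = 1) :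
    {r : F | r + r ^ q = c * r ^ ((q + 1) / 2)}.ncard = q := by
  obtain ⟨n, rfl⟩ := hodd
  have hn0 : n ≠ 0 := by
    rintro rfl
    have := Fintype.one_lt_card (α := F)
    simp [hF] at this
  have hcard : n * (2 * (2 * n + 1 + 1)) = Fintype.card F - 1 := by
    rw [hF]
    exact Nat.eq_sub_of_add_eq (by ring)
  rw [show (2 * n + 1 + 1) / 2 = n + 1 by omega, setOf_add_pow_eq_mul_pow_eq hsum hprod,
    Set.ncard_insert_of_notMem, Set.ncard_union_eq, FiniteField.ncard_setOf_pow_eq hcard h₁,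
    FiniteField.ncard_setOf_pow_eq hcard h₂]
  · ring
  · exact Set.disjoint_left.mpr fun r hr₁ hr₂ => hne (hr₁.symm.trans hr₂)
  · rintro (h | h) <;> simp only [Set.mem_ofPred_eq, zero_pow hn0] at h
    · exact left_ne_zero_of_mul_eq_one hprod h.symm
    · exact right_ne_zero_of_mul_eq_one hprod h.symm

variable [Fintype F] {q : ℕ}

theorem exists_sq_eq_and_pow_eq_neg_of_mem_Ztwo (hF : Fintype.card F = q ^ 2) (hodd : Odd q)
    (hchar : ringChar F ≠ 2) {ξ : F} (hξ : ξ ∈ Ztwo q F) :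
    ∃ δ : F, δ ^ 2 = 1 - (ξ ^ 2)⁻¹ ∧ δ ^ q = -δ := by
  obtain ⟨-, ha, -, hns⟩ := hξ
  obtain ⟨δ, hδ⟩ := FiniteField.isSquare_of_pow_eq_self hF hodd hchar ha
  rw [← sq] at hδ
  refine ⟨δ, hδ.symm, ?_⟩
  have h : (δ ^ q) ^ 2 = δ ^ 2 := by rw [← pow_mul, mul_comm, pow_mul, ← hδ, ha]
  exact (sq_eq_sq_iff_eq_or_eq_neg.mp h).resolve_left fun h' => hns ⟨δ, h', hδ⟩

theorem sq_pow_eq_of_mem_Ztwo (hF : Fintype.card F = q ^ 2) {ξ : F} (hξ : ξ ∈ Ztwo q F) :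
    (ξ ^ 2) ^ q = ξ ^ 2 := by
  obtain ⟨-, ha, -, -⟩ := hξ
  rw [← inv_inj, ← inv_pow, ← sub_sub_cancel 1 (ξ ^ 2)⁻¹,
    sub_pow_of_add_pow (add_pow_of_card_eq_sq hF), one_pow, ha]

theorem exists_roots_pow_eq_one_of_mem_Ztwo (hF : Fintype.card F = q ^ 2) (hodd : Odd q)
    (hchar : ringChar F ≠ 2) {ξ c : F} (hξ : ξ ∈ Ztwo q F) (hc : c ^ 2 = 4 * ξ ^ 2) :
    ∃ μ₁ μ₂ : F, μ₁ + μ₂ = c ∧ μ₁ * μ₂ = 1 ∧ μ₁ ≠ μ₂ ∧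
      μ₁ ^ (2 * (q + 1)) = 1 ∧ μ₂ ^ (2 * (q + 1)) = 1 := by
  have hadd := add_pow_of_card_eq_sq hF
  have h2 : (2 : F) ≠ 0 := Ring.two_ne_zero hchar
  have h2q : (2 : F) ^ q = 2 := by simpa [one_add_one_eq_two] using hadd 1 1
  have hξ0 : ξ ≠ 0 := hξ.1
  obtain ⟨δ, hδ, hδq⟩ := exists_sq_eq_and_pow_eq_neg_of_mem_Ztwo hF hodd hchar hξ
  have hδ0 : δ ≠ 0 := by rintro rfl; exact hξ.2.2.1 (by simpa using hδ.symm)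
  have hc0 : c ≠ 0 := by
    rintro rfl
    exact mul_ne_zero h2 hξ0 (pow_eq_zero_iff two_ne_zero |>.mp (by linear_combination -hc))
  have hcq : (c ^ q) ^ 2 = c ^ 2 := by
    rw [← pow_mul, mul_comm, pow_mul, hc, mul_pow, show (4 : F) = 2 * 2 by norm_num, mul_pow, h2q,
      sq_pow_eq_of_mem_Ztwo hF hξ]
  have hρ₁ : ((1 + δ) / 2) ^ q = (1 - δ) / 2 := by
    rw [div_pow, hadd, one_pow, hδq, h2q, sub_eq_add_neg]
  have hρ₂ : ((1 - δ) / 2) ^ q = (1 + δ) / 2 := by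
    rw [div_pow, sub_pow_of_add_pow hadd, one_pow, hδq, h2q, sub_neg_eq_add]
  have hprod : c * ((1 + δ) / 2) * (c * ((1 - δ) / 2)) = 1 := by
    have : ξ ^ 2 * (ξ ^ 2)⁻¹ = 1 := mul_inv_cancel₀ (pow_ne_zero 2 hξ0)
    field_simp
    linear_combination (1 - δ ^ 2) * hc - 4 * ξ ^ 2 * hδ + 4 * this
  -- Frobenius swaps the two roots up to the sign `c ^ q = ± c`.
  have hμ₁ : ((c * ((1 + δ) / 2)) ^ q) ^ 2 = (c * ((1 - δ) / 2)) ^ 2 := by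
    rw [mul_pow, hρ₁, mul_pow, hcq, mul_pow]
  have hμ₂ : ((c * ((1 - δ) / 2)) ^ q) ^ 2 = (c * ((1 + δ) / 2)) ^ 2 := by
    rw [mul_pow, hρ₂, mul_pow, hcq, mul_pow]
  refine ⟨c * ((1 + δ) / 2), c * ((1 - δ) / 2), by field_simp; ring, hprod, fun h => ?_,
    pow_two_mul_succ_eq_one hμ₁ hprod, pow_two_mul_succ_eq_one hμ₂ (by rw [mul_comm, hprod])⟩
  exact mul_ne_zero hc0 hδ0 (by linear_combination h - c * δ * mul_inv_cancel₀ h2)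

end Solutions

section SigmaVectors

variable {F : Type*} [Field F] {q : ℕ}

def sigmaVec (q : ℕ) (α β : F) : Fin 4 → F := ![α, β, β ^ q, α ^ q]

def Qpolar (u v : Fin 4 → F) : F := u 0 * v 3 + u 3 * v 0 - u 1 * v 2 - u 2 * v 1

theorem Qf_smul (a : F) (v : Fin 4 → F) : Qf (a • v) = a ^ 2 * Qf v := by
  simp only [Qf, Pi.smul_apply, smul_eq_mul]
  ring

theorem Hf_smul (a : F) (v : Fin 4 → F) : Hf q (a • v) = a ^ (q + 1) * Hf q v := by
  simp only [Hf, Pi.smul_apply, smul_eq_mul, mul_pow]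
  ring

theorem Qf_add (u v : Fin 4 → F) : Qf (u + v) = Qf u + Qpolar u v + Qf v := by
  simp only [Qf, Qpolar, Pi.add_apply]
  ring

theorem Qf_smul_add_smul (s t : F) (u v : Fin 4 → F) :
    Qf (s • u + t • v) = s ^ 2 * Qf u + s * t * Qpolar u v + t ^ 2 * Qf v := by
  simp only [Qf, Qpolar, Pi.add_apply, Pi.smul_apply, smul_eq_mul]
  ring

theorem Hf_smul_eq_mul_Qf_smul_pow_iff (hodd : Odd q) (c : F) {a : F} (ha : a ≠ 0)
    (v : Fin 4 → F) :
    Hf q (a • v) = c * Qf (a • v) ^ ((q + 1) / 2) ↔ Hf q v = c * Qf v ^ ((q + 1) / 2) := by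
  obtain ⟨n, rfl⟩ := hodd
  rw [Hf_smul, Qf_smul, mul_pow, ← pow_mul, show 2 * ((2 * n + 1 + 1) / 2) = 2 * n + 1 + 1 by omega,
    mul_left_comm, mul_right_inj' (pow_ne_zero _ ha)]

theorem smul_sigmaVec_add_smul_sigmaVec (hadd : ∀ x y : F, (x + y) ^ q = x ^ q + y ^ q)
    {s t : F} (hs : s ^ q = s) (ht : t ^ q = t) (α₁ β₁ α₂ β₂ : F) :
    s • sigmaVec q α₁ β₁ + t • sigmaVec q α₂ β₂ =
      sigmaVec q (s * α₁ + t * α₂) (s * β₁ + t * β₂) := by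
  ext i
  fin_cases i <;> simp [sigmaVec, hadd, mul_pow, hs, ht]

theorem Hf_sigmaVec (hinv : ∀ x : F, (x ^ q) ^ q = x) (α β : F) :
    Hf q (sigmaVec q α β) = 2 * Qf (sigmaVec q α β) := by
  simp only [Hf, Qf, sigmaVec, Matrix.cons_val, pow_succ _ q, hinv]
  ring

theorem Hf_smul_add_smul_sigmaVec (hadd : ∀ x y : F, (x + y) ^ q = x ^ q + y ^ q)
    (hinv : ∀ x : F, (x ^ q) ^ q = x) (s t α₁ β₁ α₂ β₂ : F) :
    Hf q (s • sigmaVec q α₁ β₁ + t • sigmaVec q α₂ β₂) =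
      2 * s ^ (q + 1) * Qf (sigmaVec q α₁ β₁) +
        (s * t ^ q + s ^ q * t) * Qpolar (sigmaVec q α₁ β₁) (sigmaVec q α₂ β₂) +
          2 * t ^ (q + 1) * Qf (sigmaVec q α₂ β₂) := by
  simp only [Hf, Qf, Qpolar, sigmaVec, Matrix.cons_val, Pi.add_apply, Pi.smul_apply, smul_eq_mul,
    pow_succ _ q, hadd, mul_pow, hinv]
  ring

theorem Qpolar_sigmaVec_pow (hadd : ∀ x y : F, (x + y) ^ q = x ^ q + y ^ q)
    (hinv : ∀ x : F, (x ^ q) ^ q = x) (α₁ β₁ α₂ β₂ : F) :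
    Qpolar (sigmaVec q α₁ β₁) (sigmaVec q α₂ β₂) ^ q =
      Qpolar (sigmaVec q α₁ β₁) (sigmaVec q α₂ β₂) := by
  simp only [Qpolar, sigmaVec, Matrix.cons_val, sub_pow_of_add_pow hadd, hadd, mul_pow, hinv]
  ring

theorem Hf_smul_add_sigmaVec_eq_iff (hadd : ∀ x y : F, (x + y) ^ q = x ^ q + y ^ q) (hinv : ∀ x : F, (x ^ q) ^ q = x)
    (hodd : Odd q) {α₁ β₁ α₂ β₂ : F} (h₁ : Qf (sigmaVec q α₁ β₁) = 0)
    (h₂ : Qf (sigmaVec q α₂ β₂) = 0) (hB : Qpolar (sigmaVec q α₁ β₁) (sigmaVec q α₂ β₂) ≠ 0)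
    (c r : F) :
    Hf q (r • sigmaVec q α₁ β₁ + sigmaVec q α₂ β₂) =
        c * Qf (r • sigmaVec q α₁ β₁ + sigmaVec q α₂ β₂) ^ ((q + 1) / 2) ↔
      r + r ^ q = c * Qpolar (sigmaVec q α₁ β₁) (sigmaVec q α₂ β₂) ^ ((q - 1) / 2) *
        r ^ ((q + 1) / 2) := by
  have hH := Hf_smul_add_smul_sigmaVec hadd hinv r 1 α₁ β₁ α₂ β₂
  have hQ := Qf_smul_add_smul r 1 (sigmaVec q α₁ β₁) (sigmaVec q α₂ β₂)
  rw [one_smul] at hH hQ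
  set B := Qpolar (sigmaVec q α₁ β₁) (sigmaVec q α₂ β₂)
  obtain ⟨n, rfl⟩ := hodd
  rw [hH, hQ, h₁, h₂, show (2 * n + 1 + 1) / 2 = n + 1 by omega,
    show (2 * n + 1 - 1) / 2 = n by omega]
  constructor <;> intro h
  · exact mul_right_cancel₀ hB (by linear_combination h)
  · linear_combination B * h

end SigmaVectors

section PairBasis

variable {K V : Type*} [Field K] [AddCommGroup V] [Module K V] {u w : V} {s₁ t₁ s₂ t₂ : K}

theorem LinearIndependent.pair_smul_add_smul (h : LinearIndependent K ![u, w])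
    (hdet : s₁ * t₂ - s₂ * t₁ ≠ 0) :
    LinearIndependent K ![s₁ • u + t₁ • w, s₂ • u + t₂ • w] := by
  rw [LinearIndependent.pair_iff] at h ⊢
  intro a b hab
  obtain ⟨h₁, h₂⟩ := h (a * s₁ + b * s₂) (a * t₁ + b * t₂) (by rw [← hab]; module)
  have ha : a * (s₁ * t₂ - s₂ * t₁) = 0 := by linear_combination t₂ * h₁ - s₂ * h₂
  have hb : b * (s₁ * t₂ - s₂ * t₁) = 0 := by linear_combination s₁ * h₂ - t₁ * h₁
  exact ⟨(mul_eq_zero.mp ha).resolve_right hdet, (mul_eq_zero.mp hb).resolve_right hdet⟩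

theorem span_pair_smul_add_smul (hdet : s₁ * t₂ - s₂ * t₁ ≠ 0) :
    Submodule.span K {s₁ • u + t₁ • w, s₂ • u + t₂ • w} = Submodule.span K {u, w} := by
  apply le_antisymm <;> rw [Submodule.span_le, Set.insert_subset_iff, Set.singleton_subset_iff]
  · exact ⟨Submodule.mem_span_pair.mpr ⟨s₁, t₁, rfl⟩, Submodule.mem_span_pair.mpr ⟨s₂, t₂, rfl⟩⟩
  · set d := s₁ * t₂ - s₂ * t₁ with hd
    constructor
    · refine Submodule.mem_span_pair.mpr ⟨d⁻¹ * t₂, -(d⁻¹ * t₁), ?_⟩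
      conv_rhs => rw [← inv_smul_smul₀ hdet u]
      rw [hd]
      module
    · refine Submodule.mem_span_pair.mpr ⟨-(d⁻¹ * s₂), d⁻¹ * s₁, ?_⟩
      conv_rhs => rw [← inv_smul_smul₀ hdet w]
      rw [hd]
      module

end PairBasis

section ProjectiveLine

variable {F : Type*} [Field F]

theorem mem_Fline_self (v : Fin 4 → F) : v ∈ Fline v := ⟨1, (one_smul F v).symm⟩

theorem Fline_smul {a : F} (ha : a ≠ 0) (v : Fin 4 → F) : Fline (a • v) = Fline v := by
  ext x
  constructor
  · rintro ⟨b, rfl⟩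
    exact ⟨b * a, smul_smul b a v⟩
  · rintro ⟨b, rfl⟩
    exact ⟨b / a, by rw [smul_smul, div_mul_cancel₀ _ ha]⟩

variable {U W : Fin 4 → F} {P : (Fin 4 → F) → Prop}

theorem setOf_Fline_span_pair_eq (hUW : LinearIndependent F ![U, W])
    (hP : ∀ (a : F) (v : Fin 4 → F), a ≠ 0 → (P (a • v) ↔ P v)) (hPU : P U) :
    {L | ∃ v : Fin 4 → F, v ≠ 0 ∧ v ∈ Submodule.span F {U, W} ∧ P v ∧ L = Fline v} =
      insert (Fline U) ((fun r : F => Fline (r • U + W)) '' {r | P (r • U + W)}) := by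
  ext L
  simp only [Set.mem_ofPred_eq, Set.mem_insert_iff, Set.mem_image]
  constructor
  · rintro ⟨v, hv0, hv, hPv, rfl⟩
    obtain ⟨s, t, rfl⟩ := Submodule.mem_span_pair.mp hv
    rcases eq_or_ne t 0 with rfl | ht
    · rw [zero_smul, add_zero] at hv0 ⊢
      exact Or.inl (Fline_smul (left_ne_zero_of_smul hv0) U)
    · have hv : s • U + t • W = t • ((s / t) • U + W) := by
        rw [smul_add, smul_smul, mul_div_cancel₀ _ ht]
      rw [hv] at hPv ⊢
      exact Or.inr ⟨s / t, (hP t _ ht).mp hPv, (Fline_smul ht _).symm⟩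
  · rintro (rfl | ⟨r, hr, rfl⟩)
    · exact ⟨U, by simpa using hUW.ne_zero 0, Submodule.subset_span (by simp), hPU, rfl⟩
    · refine ⟨r • U + W, fun h => ?_, Submodule.mem_span_pair.mpr ⟨r, 1, by rw [one_smul]⟩, hr, rfl⟩
      exact one_ne_zero (LinearIndependent.pair_iff.mp hUW r 1 (by rwa [one_smul])).2

theorem ncard_setOf_Fline_span_pair [Finite F] (hUW : LinearIndependent F ![U, W])
    (hP : ∀ (a : F) (v : Fin 4 → F), a ≠ 0 → (P (a • v) ↔ P v)) (hPU : P U) :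
    {L | ∃ v : Fin 4 → F, v ≠ 0 ∧ v ∈ Submodule.span F {U, W} ∧ P v ∧ L = Fline v}.ncard =
      {r : F | P (r • U + W)}.ncard + 1 := by
  have hindep := LinearIndependent.pair_iff.mp hUW
  have hinj : Function.Injective fun r : F => Fline (r • U + W) := by
    intro r₁ r₂ h
    replace h : Fline (r₁ • U + W) = Fline (r₂ • U + W) := h
    obtain ⟨a, ha⟩ : r₂ • U + W ∈ Fline (r₁ • U + W) := h ▸ mem_Fline_self _
    obtain ⟨h₁, h₂⟩ := hindep (r₂ - a * r₁) (1 - a) (by linear_combination (norm := module) ha)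
    linear_combination -h₁ + r₁ * h₂
  have hU : Fline U ∉ (fun r : F => Fline (r • U + W)) '' {r | P (r • U + W)} := by
    rintro ⟨r, -, h⟩
    replace h : Fline (r • U + W) = Fline U := h
    obtain ⟨a, ha⟩ : U ∈ Fline (r • U + W) := h ▸ mem_Fline_self _
    obtain ⟨h₁, h₂⟩ := hindep (1 - a * r) (-a) (by linear_combination (norm := module) ha)
    exact one_ne_zero (by linear_combination h₁ - r * h₂)
  rw [setOf_Fline_span_pair_eq hUW hP hPU, Set.ncard_insert_of_notMem hU ((Set.toFinite _).image _),
    Set.ncard_image_of_injective _ hinj]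

end ProjectiveLine

section Secant

variable {F : Type*} [Field F] {q : ℕ}

def fqLine (q : ℕ) (s t : F) : Set (F × F) := {p | ∃ e : F, e ^ q = e ∧ p = (e * s, e * t)}

theorem det_eq_zero_of_mem_fqLine {s t a b : F} (h : (a, b) ∈ fqLine q s t) :
    s * b - t * a = 0 := by
  obtain ⟨e, -, he⟩ := h
  rw [Prod.mk.injEq] at he
  rw [he.1, he.2]
  ring

theorem fqLine_mul {e : F} (he : e ^ q = e) (he0 : e ≠ 0) (s t : F) :
    fqLine q (e * s) (e * t) = fqLine q s t := by
  ext p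
  constructor
  · rintro ⟨f, hf, rfl⟩
    exact ⟨f * e, by rw [mul_pow, hf, he], by simp only [mul_assoc]⟩
  · rintro ⟨f, hf, rfl⟩
    refine ⟨f / e, by rw [div_pow, hf, he], ?_⟩
    simp only [← mul_assoc, div_mul_cancel₀ _ he0]

theorem fqLine_eq_of_det_eq_zero {s t s' t' : F} (hs : s ^ q = s) (ht : t ^ q = t)
    (hs' : s' ^ q = s') (ht' : t' ^ q = t') (h0 : (s, t) ≠ (0, 0)) (h0' : (s', t') ≠ (0, 0))
    (hdet : s * t' - s' * t = 0) : fqLine q s t = fqLine q s' t' := by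
  obtain ⟨e, he, hse, hte⟩ : ∃ e : F, e ^ q = e ∧ s' = e * s ∧ t' = e * t := by
    rcases eq_or_ne s 0 with rfl | hs0
    · have ht0 : t ≠ 0 := fun h => h0 (by rw [h])
      refine ⟨t' / t, by rw [div_pow, ht, ht'], ?_, by rw [div_mul_cancel₀ _ ht0]⟩
      simpa [ht0] using hdet
    · refine ⟨s' / s, by rw [div_pow, hs, hs'], by rw [div_mul_cancel₀ _ hs0], ?_⟩
      field_simp
      linear_combination hdet
  have he0 : e ≠ 0 := by
    rintro rfl
    exact h0' (by rw [hse, hte, zero_mul, zero_mul])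
  rw [hse, hte, fqLine_mul he he0]

theorem exists_isotropic_pair_of_tangentCount_eq_two
    (hadd : ∀ x y : F, (x + y) ^ q = x ^ q + y ^ q) {u w : Fin 4 → F}
    (h : tangentCount q u w = 2) :
    ∃ s₁ t₁ s₂ t₂ : F, s₁ ^ q = s₁ ∧ t₁ ^ q = t₁ ∧ s₂ ^ q = s₂ ∧ t₂ ^ q = t₂ ∧
      s₁ * t₂ - s₂ * t₁ ≠ 0 ∧ Qf (s₁ • u + t₁ • w) = 0 ∧ Qf (s₂ • u + t₂ • w) = 0 ∧
      Qf ((s₁ • u + t₁ • w) + (s₂ • u + t₂ • w)) ≠ 0 := by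
  rw [tangentCount, Set.ncard_eq_two] at h
  obtain ⟨X, Y, hXY, hset⟩ := h
  obtain ⟨s₁, t₁, hs₁, ht₁, h₁, hQ₁, rfl⟩ := (Set.ext_iff.mp hset X).mpr (by simp)
  obtain ⟨s₂, t₂, hs₂, ht₂, h₂, hQ₂, rfl⟩ := (Set.ext_iff.mp hset Y).mpr (by simp)
  have hdet : s₁ * t₂ - s₂ * t₁ ≠ 0 := fun hdet =>
    hXY (fqLine_eq_of_det_eq_zero hs₁ ht₁ hs₂ ht₂ h₁ h₂ hdet)
  refine ⟨s₁, t₁, s₂, t₂, hs₁, ht₁, hs₂, ht₂, hdet, hQ₁, hQ₂, fun hQ => ?_⟩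
  have hsum : (s₁ + s₂) • u + (t₁ + t₂) • w = (s₁ • u + t₁ • w) + (s₂ • u + t₂ • w) := by module
  have h₃ : (s₁ + s₂, t₁ + t₂) ≠ ((0 : F), (0 : F)) := by
    intro h
    simp only [Prod.mk.injEq] at h
    exact hdet (by linear_combination s₁ * h.2 - t₁ * h.1)
  have hQ₃ : Qf ((s₁ + s₂) • u + (t₁ + t₂) • w) = 0 := by rwa [hsum]
  have hmem := (Set.ext_iff.mp hset (fqLine q (s₁ + s₂) (t₁ + t₂))).mp
    ⟨s₁ + s₂, t₁ + t₂, by rw [hadd, hs₁, hs₂], by rw [hadd, ht₁, ht₂], h₃, hQ₃, rfl⟩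
  have hself : (s₁ + s₂, t₁ + t₂) ∈ fqLine q (s₁ + s₂) (t₁ + t₂) := ⟨1, one_pow q, by simp⟩
  rcases hmem with hX | hY
  · have := det_eq_zero_of_mem_fqLine (hX ▸ hself)
    exact hdet (by linear_combination this)
  · have := det_eq_zero_of_mem_fqLine (hY ▸ hself)
    exact hdet (by linear_combination -this)

end Secant

theorem exists_isotropic_sigmaVec_basis {F : Type*} [Field F] {q : ℕ}
    (hadd : ∀ x y : F, (x + y) ^ q = x ^ q + y ^ q) {α₁ β₁ α₂ β₂ : F}
    (hind : LinearIndependent F ![sigmaVec q α₁ β₁, sigmaVec q α₂ β₂])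
    (hsec : tangentCount q (sigmaVec q α₁ β₁) (sigmaVec q α₂ β₂) = 2) :
    ∃ a₁ b₁ a₂ b₂ : F,
      Submodule.span F {sigmaVec q α₁ β₁, sigmaVec q α₂ β₂} =
        Submodule.span F {sigmaVec q a₁ b₁, sigmaVec q a₂ b₂} ∧
      LinearIndependent F ![sigmaVec q a₁ b₁, sigmaVec q a₂ b₂] ∧
      Qf (sigmaVec q a₁ b₁) = 0 ∧ Qf (sigmaVec q a₂ b₂) = 0 ∧
      Qpolar (sigmaVec q a₁ b₁) (sigmaVec q a₂ b₂) ≠ 0 := by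
  obtain ⟨s₁, t₁, s₂, t₂, hs₁, ht₁, hs₂, ht₂, hdet, hQ₁, hQ₂, hQ⟩ :=
    exists_isotropic_pair_of_tangentCount_eq_two hadd hsec
  have hU := smul_sigmaVec_add_smul_sigmaVec hadd hs₁ ht₁ α₁ β₁ α₂ β₂
  have hW := smul_sigmaVec_add_smul_sigmaVec hadd hs₂ ht₂ α₁ β₁ α₂ β₂
  rw [hU] at hQ₁ hQ
  rw [hW] at hQ₂ hQ
  refine ⟨_, _, _, _, ?_, ?_, hQ₁, hQ₂, fun hB => hQ ?_⟩
  · rw [← hU, ← hW, span_pair_smul_add_smul hdet]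
  · rw [← hU, ← hW]
    exact hind.pair_smul_add_smul hdet
  · rw [Qf_add, hQ₁, hQ₂, hB, add_zero, add_zero]

theorem stmt17_general (q : ℕ) (hodd : Odd q)
    (F : Type*) [Field F] [Fintype F] (hF : Fintype.card F = q ^ 2)
    (ξ : F) (hξ : ξ ∈ Ztwo q F)
    (u w : Fin 4 → F) (hu : IsSigmaVec q u) (hw : IsSigmaVec q w)
    (hind : LinearIndependent F ![u, w])
    (hsec : tangentCount q u w = 2) :
    Set.ncard {L : Set (Fin 4 → F) | ∃ v : Fin 4 → F, v ≠ 0 ∧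
      v ∈ Submodule.span F {u, w} ∧
      Hf q v = 2 * ξ * Qf v ^ ((q + 1) / 2) ∧ L = Fline v} = q + 1 := by
  have hadd := add_pow_of_card_eq_sq hF
  have hinv := pow_pow_of_card_eq_sq hF
  obtain ⟨-, α₁, β₁, (rfl : u = sigmaVec q α₁ β₁)⟩ := hu
  obtain ⟨-, α₂, β₂, (rfl : w = sigmaVec q α₂ β₂)⟩ := hw
  obtain ⟨a₁, b₁, a₂, b₂, hspan, hind', hQ₁, hQ₂, hB⟩ :=
    exists_isotropic_sigmaVec_basis hadd hind hsec
  set B := Qpolar (sigmaVec q a₁ b₁) (sigmaVec q a₂ b₂)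
  have hc : (2 * ξ * B ^ ((q - 1) / 2)) ^ 2 = 4 * ξ ^ 2 := by
    rw [mul_pow, sq_pow_div_two_eq_one hodd hB (Qpolar_sigmaVec_pow hadd hinv _ _ _ _)]
    ring
  calc _ = {r : F | Hf q (r • sigmaVec q a₁ b₁ + sigmaVec q a₂ b₂) =
        2 * ξ * Qf (r • sigmaVec q a₁ b₁ + sigmaVec q a₂ b₂) ^ ((q + 1) / 2)}.ncard + 1 := by
        rw [hspan]
        refine ncard_setOf_Fline_span_pair hind'
          (fun a v ha => Hf_smul_eq_mul_Qf_smul_pow_iff hodd _ ha v) ?_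
        rw [Hf_sigmaVec hinv, hQ₁, zero_pow (by have := hodd.pos; omega), mul_zero, mul_zero]
    _ = {r : F | r + r ^ q = 2 * ξ * B ^ ((q - 1) / 2) * r ^ ((q + 1) / 2)}.ncard + 1 := by
        congr 2
        ext r
        exact Hf_smul_add_sigmaVec_eq_iff hadd hinv hodd hQ₁ hQ₂ hB _ r
    _ = q + 1 := by
        obtain ⟨μ₁, μ₂, hsum, hprod, hne, h₁, h₂⟩ := exists_roots_pow_eq_one_of_mem_Ztwo hF hodd
          (ringChar_ne_two_of_card_eq_sq hF hodd) hξ hc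
        rw [ncard_setOf_add_pow_eq_mul_pow hF hodd hsum hprod hne h₁ h₂]

/-- An extended `Σ`-line secant to `Q₀` meets the surface `S_ξ`, `ξ ∈ Z₂`, in exactly
`q+1` points. -/
theorem stmt17 (q : ℕ) (hq : ∃ p k : ℕ, p.Prime ∧ 0 < k ∧ q = p ^ k) (hodd : Odd q)
    (F : Type*) [Field F] [Fintype F] (hF : Fintype.card F = q ^ 2)
    (ξ : F) (hξ : ξ ∈ Ztwo q F)
    (u w : Fin 4 → F) (hu : IsSigmaVec q u) (hw : IsSigmaVec q w)
    (hind : LinearIndependent F ![u, w])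
    (hsec : tangentCount q u w = 2) :
    Set.ncard {L : Set (Fin 4 → F) | ∃ v : Fin 4 → F, v ≠ 0 ∧
      v ∈ Submodule.span F {u, w} ∧
      Hf q v = 2 * ξ * Qf v ^ ((q + 1) / 2) ∧ L = Fline v} = q + 1 :=
  stmt17_general q hodd F hF ξ hξ u w hu hw hind hsec
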